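/- arXiv:2604.06630 — 3 statements merged into one kernel-verified Lean document; each statement's English description precedes it below -/
import Mathlib

section
/- Let C be a perfect complex over the formal power series ring C[[ħ]] (ħ one formal variable over the complex numbers). Write ι : C → C[[ħ]] for the quotient map to the residue field ħ ↦ 0 and K = C((ħ)) for the fraction field. If for every integer i one has dim_C H^i(C ⊗^L_{C[[ħ]]} C) = dim_{C((ħ))} H^i(C ⊗_{C[[ħ]]} C((ħ))), then every cohomology module H^i(C) is a finite free C[[ħ]]-module. -/
/-!
Over the discrete valuation ring `ℂ[[ħ]]`, put the images of `d^{i-1}` and `d^i` in Smith normal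
form. After base change to a field, the rank of a differential is the number of its elementary
divisors that survive there: all of them over `ℂ((ħ))`, only the units over `ℂ`. Since over a
field `dim H^i = rank C^i - rank d^{i-1} - rank d^i`, equality of the two dimensions forces every
elementary divisor of `d^{i-1}` to be a unit. Then `C^i ⧸ im d^{i-1}` is torsion-free, `H^i`
embeds into it, and a finitely generated torsion-free module over a PID is free.
-/

open Module CategoryTheory Finset

lemma LinearMap.range_baseChange {R A M N : Type*} [CommRing R] [CommRing A] [Algebra R A]
    [AddCommGroup M] [Module R M] [AddCommGroup N] [Module R N] (φ : M →ₗ[R] N) :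
    range (φ.baseChange A) = (range φ).baseChange A := by
  conv_lhs => rw [← subtype_comp_codRestrict φ _ (mem_range_self φ)]
  rw [baseChange_comp, range_comp_of_range_eq_top _ (range_eq_top.mpr _)]
  · rfl
  rw [baseChange_eq_ltensor]
  exact lTensor_surjective _ φ.surjective_rangeRestrict

lemma Module.Basis.finrank_span_range_smul {K V ι κ : Type*} [Field K] [DecidableEq K]
    [AddCommGroup V] [Module K V] [Fintype κ] (b : Basis ι K V) (u : κ ↪ ι) (c : κ → K) :
    finrank K (Submodule.span K (Set.range fun j => c j • b (u j))) = #{j | c j ≠ 0} := by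
  set s : Finset κ := {j | c j ≠ 0}
  have hspan : Submodule.span K (Set.range fun j => c j • b (u j)) =
      Submodule.span K (Set.range fun j : s => c j • b (u j)) := by
    refine le_antisymm (Submodule.span_le.mpr ?_) (Submodule.span_mono ?_)
    · rintro - ⟨j, rfl⟩
      by_cases h : c j = 0
      · simp [h]
      · exact Submodule.subset_span ⟨⟨j, by simpa [s] using h⟩, rfl⟩
    · rintro - ⟨j, rfl⟩
      exact ⟨j, rfl⟩
  have hli : LinearIndependent K fun j : s => c j • b (u j) := by
    have := (b.linearIndependent.comp (fun j : s => u j)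
      (u.injective.comp Subtype.val_injective)).units_smul
        fun j => Units.mk0 (c j) (mem_filter.mp j.2).2
    exact this
  rw [hspan, finrank_span_eq_card hli, Fintype.card_coe]

namespace Module.Basis.SmithNormalForm

variable {R N ι : Type*} [CommRing R] [AddCommGroup N] [Module R N] {p : Submodule R N} {m : ℕ}
  (snf : SmithNormalForm p ι m)

lemma finrank_baseChange {F : Type*} [Field F] [DecidableEq F] [Algebra R F] :
    finrank F (p.baseChange F) = #{j | algebraMap R F (snf.a j) ≠ 0} := by
  have hspan : p = Submodule.span R (Set.range fun j => (snf.bN j : N)) := by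
    conv_lhs => rw [← Submodule.map_subtype_top p, ← snf.bN.span_eq, Submodule.map_span,
      ← Set.range_comp]
    rfl
  have htmul (j : Fin m) : (1 : F) ⊗ₜ[R] (snf.bN j : N) =
      algebraMap R F (snf.a j) • snf.bM.baseChange F (snf.f j) := by
    rw [snf.snf, Basis.baseChange_apply, TensorProduct.tmul_smul, algebraMap_smul]
  have hbc : p.baseChange F = Submodule.span F
      (Set.range fun j => algebraMap R F (snf.a j) • snf.bM.baseChange F (snf.f j)) := by
    conv_lhs => rw [hspan, Submodule.baseChange_span, ← Set.range_comp]
    simp only [Function.comp_def, TensorProduct.mk_apply, htmul]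
  rw [hbc]
  exact (snf.bM.baseChange F).finrank_span_range_smul snf.f _

lemma a_ne_zero [Nontrivial R] (j : Fin m) : snf.a j ≠ 0 :=
  fun h => snf.bN.ne_zero j (Subtype.ext (by rw [snf.snf, h, zero_smul]; rfl))

lemma card_filter_map_a_ne_zero_of_injective [Nontrivial R] {S : Type*} [Ring S] [DecidableEq S]
    {g : R →+* S} (hg : Function.Injective g) : #{j | g (snf.a j) ≠ 0} = m := by
  rw [filter_true_of_mem fun j _ => (map_ne_zero_iff g hg).mpr (snf.a_ne_zero j), card_univ,
    Fintype.card_fin]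

lemma mem_of_isUnit_of_repr_eq_zero [Fintype ι] (hunit : ∀ j, IsUnit (snf.a j)) {x : N}
    (hx : ∀ i ∉ Set.range snf.f, snf.bM.repr x i = 0) : x ∈ p := by
  rw [← snf.bM.sum_repr x]
  refine Submodule.sum_mem _ fun i _ => ?_
  by_cases hi : i ∈ Set.range snf.f
  · obtain ⟨j, rfl⟩ := hi
    have hbM : snf.bM (snf.f j) = (hunit j).unit⁻¹ • (snf.bN j : N) := by
      rw [snf.snf, Units.smul_def, smul_smul, IsUnit.val_inv_mul, one_smul]
    rw [hbM]
    exact Submodule.smul_mem _ _ (Submodule.smul_mem _ _ (snf.bN j).2)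
  · rw [hx i hi, zero_smul]
    exact p.zero_mem

lemma isTorsionFree_quotient [IsDomain R] [Fintype ι] (hunit : ∀ j, IsUnit (snf.a j)) :
    IsTorsionFree R (N ⧸ p) := by
  refine .of_smul_eq_zero fun r y hry => or_iff_not_imp_left.mpr fun hr => ?_
  obtain ⟨x, rfl⟩ := Submodule.Quotient.mk_surjective p y
  rw [← Submodule.Quotient.mk_smul, Submodule.Quotient.mk_eq_zero] at hry
  rw [Submodule.Quotient.mk_eq_zero]
  refine snf.mem_of_isUnit_of_repr_eq_zero hunit fun i hi => ?_
  have := snf.repr_eq_zero_of_notMem_range ⟨_, hry⟩ hi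
  rw [map_smul, Finsupp.smul_apply, smul_eq_mul] at this
  exact (mul_eq_zero.mp this).resolve_left hr

end Module.Basis.SmithNormalForm

namespace ModuleCat

variable {R F : Type*} [CommRing R] [Field F] (g : R →+* F)

lemma finrank_range_extendScalars_map [DecidableEq F] {M N : ModuleCat R} (φ : M ⟶ N)
    {ι : Type*} {m : ℕ} (snf : Basis.SmithNormalForm (LinearMap.range φ.hom) ι m) :
    finrank F (LinearMap.range ((extendScalars g).map φ).hom) = #{j | g (snf.a j) ≠ 0} := by
  let := g.toAlgebra
  have := snf.finrank_baseChange (F := F)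
  rw [← LinearMap.range_baseChange] at this
  exact this

instance finiteDimensional_extendScalars_obj (M : ModuleCat R) [Module.Finite R M] :
    FiniteDimensional F ((extendScalars g).obj M) := by
  let := g.toAlgebra
  exact inferInstanceAs (Module.Finite F (TensorProduct R F M))

lemma finrank_extendScalars_obj [Nontrivial R] (M : ModuleCat R) [Module.Free R M]
    [Module.Finite R M] : finrank F ((extendScalars g).obj M) = finrank R M := by
  let := g.toAlgebra
  exact finrank_baseChange

end ModuleCat

namespace CategoryTheory.ShortComplex

lemma finrank_homology_add_finrank_range {F : Type*} [Field F] (S : ShortComplex (ModuleCat F))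
    [FiniteDimensional F S.X₂] :
    finrank F S.homology + finrank F (LinearMap.range S.f.hom) +
      finrank F (LinearMap.range S.g.hom) = finrank F S.X₂ := by
  have hH : finrank F S.homology =
      finrank F (LinearMap.ker S.g.hom ⧸ LinearMap.range S.moduleCatToCycles) :=
    S.moduleCatHomologyIso.toLinearEquiv.finrank_eq
  have hf : finrank F (LinearMap.range S.moduleCatToCycles) =
      finrank F (LinearMap.range S.f.hom) := by
    rw [← Submodule.finrank_map_subtype_eq, ← LinearMap.range_comp]
    rfl
  have := Submodule.finrank_quotient_add_finrank (LinearMap.range S.moduleCatToCycles)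
  have := LinearMap.finrank_range_add_finrank_ker S.g.hom
  omega

section Homology

variable {R : Type*} [CommRing R] (S : ShortComplex (ModuleCat R))

lemma injective_homologyι_comp_moduleCatOpcyclesIso_hom :
    Function.Injective (S.homologyι ≫ S.moduleCatOpcyclesIso.hom) :=
  (ModuleCat.mono_iff_injective _).mp inferInstance

lemma isTorsionFree_homology [IsTorsionFree R (S.X₂ ⧸ LinearMap.range S.f.hom)] :
    IsTorsionFree R S.homology :=
  S.injective_homologyι_comp_moduleCatOpcyclesIso_hom.moduleIsTorsionFree _ fun r x => by simp

lemma finite_homology [IsNoetherianRing R] [Module.Finite R S.X₂] : Module.Finite R S.homology :=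
  .of_injective (S.homologyι ≫ S.moduleCatOpcyclesIso.hom).hom
    S.injective_homologyι_comp_moduleCatOpcyclesIso_hom

end Homology

universe u v

variable {R : Type u} [CommRing R]

lemma finrank_homology_map_extendScalars_add [Nontrivial R] {F : Type u} [Field F]
    [DecidableEq F] (g : R →+* F) (S : ShortComplex (ModuleCat.{max v u} R))
    [Module.Free R S.X₂] [Module.Finite R S.X₂] {ι₂ ι₃ : Type*} {m₁ m₂ : ℕ}
    (snf₁ : Basis.SmithNormalForm (LinearMap.range S.f.hom) ι₂ m₁)
    (snf₂ : Basis.SmithNormalForm (LinearMap.range S.g.hom) ι₃ m₂) :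
    finrank F (S.map (ModuleCat.extendScalars g)).homology + #{j | g (snf₁.a j) ≠ 0} +
      #{j | g (snf₂.a j) ≠ 0} = finrank R S.X₂ := by
  have : FiniteDimensional F (S.map (ModuleCat.extendScalars g)).X₂ :=
    ModuleCat.finiteDimensional_extendScalars_obj g S.X₂
  rw [← ModuleCat.finrank_range_extendScalars_map g S.f snf₁,
    ← ModuleCat.finrank_range_extendScalars_map g S.g snf₂,
    ← ModuleCat.finrank_extendScalars_obj g S.X₂]
  exact (S.map (ModuleCat.extendScalars g)).finrank_homology_add_finrank_range

theorem free_and_finite_homology_of_finrank_homology_map_eq [IsDomain R] [IsPrincipalIdealRing R]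
    {k K : Type u} [Field k] [Field K] (gk : R →+* k) (hgk : ∀ r, gk r ≠ 0 → IsUnit r)
    (gK : R →+* K) (hgK : Function.Injective gK) (S : ShortComplex (ModuleCat.{max v u} R))
    [Module.Free R S.X₂] [Module.Finite R S.X₂] [Module.Free R S.X₃] [Module.Finite R S.X₃]
    (h : finrank k (S.map (ModuleCat.extendScalars gk)).homology =
      finrank K (S.map (ModuleCat.extendScalars gK)).homology) :
    Module.Free R S.homology ∧ Module.Finite R S.homology := by
  classical
  obtain ⟨m₁, snf₁⟩ := (LinearMap.range S.f.hom).smithNormalForm (Free.chooseBasis R S.X₂)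
  obtain ⟨m₂, snf₂⟩ := (LinearMap.range S.g.hom).smithNormalForm (Free.chooseBasis R S.X₃)
  have hk := finrank_homology_map_extendScalars_add gk S snf₁ snf₂
  have hK := finrank_homology_map_extendScalars_add gK S snf₁ snf₂
  rw [snf₁.card_filter_map_a_ne_zero_of_injective hgK,
    snf₂.card_filter_map_a_ne_zero_of_injective hgK] at hK
  have h₁ := card_filter_le univ fun j => gk (snf₁.a j) ≠ 0
  have h₂ := card_filter_le univ fun j => gk (snf₂.a j) ≠ 0
  rw [card_univ, Fintype.card_fin] at h₁ h₂
  have hcard : #{j | gk (snf₁.a j) ≠ 0} = #(univ : Finset (Fin m₁)) := by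
    rw [card_univ, Fintype.card_fin]
    omega
  have hunit (j : Fin m₁) : IsUnit (snf₁.a j) :=
    hgk _ (card_filter_eq_iff.mp hcard j (mem_univ j))
  have := snf₁.isTorsionFree_quotient hunit
  have := S.isTorsionFree_homology
  have := S.finite_homology
  exact ⟨inferInstance, inferInstance⟩

end CategoryTheory.ShortComplex

lemma CochainComplex.finrank_homology_eq_finrank_homology_sc' {F : Type*} [Field F]
    (D : CochainComplex (ModuleCat F) ℤ) (i : ℤ) :
    finrank F (D.homology i) = finrank F (D.sc' (i - 1) i (i + 1)).homology :=
  (D.homologyIsoSc' (i - 1) i (i + 1) (by simp) (by simp)).toLinearEquiv.finrank_eq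

theorem stmt1_general (C : CochainComplex (ModuleCat (PowerSeries ℂ)) ℤ)
    (hfree : ∀ i : ℤ, Module.Free (PowerSeries ℂ) (C.X i))
    (hfin : ∀ i : ℤ, Module.Finite (PowerSeries ℂ) (C.X i))
    (hdim : ∀ i : ℤ,
      Module.finrank ℂ
          ((((ModuleCat.extendScalars
                (PowerSeries.constantCoeff : PowerSeries ℂ →+* ℂ)).mapHomologicalComplex
              (ComplexShape.up ℤ)).obj C).homology i)
        = Module.finrank (LaurentSeries ℂ)
          ((((ModuleCat.extendScalars
                (HahnSeries.ofPowerSeries ℤ ℂ : PowerSeries ℂ →+* LaurentSeries ℂ)).mapHomologicalComplex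
              (ComplexShape.up ℤ)).obj C).homology i)) :
    ∀ i : ℤ, Module.Free (PowerSeries ℂ) (C.homology i) ∧
      Module.Finite (PowerSeries ℂ) (C.homology i) := by
  intro i
  set S := C.sc' (i - 1) i (i + 1)
  have : Module.Free (PowerSeries ℂ) S.X₂ := hfree i
  have : Module.Finite (PowerSeries ℂ) S.X₂ := hfin i
  have : Module.Free (PowerSeries ℂ) S.X₃ := hfree (i + 1)
  have : Module.Finite (PowerSeries ℂ) S.X₃ := hfin (i + 1)
  obtain ⟨_, _⟩ := S.free_and_finite_homology_of_finrank_homology_map_eq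
    PowerSeries.constantCoeff (fun r hr => PowerSeries.isUnit_iff_constantCoeff.mpr hr.isUnit)
    (HahnSeries.ofPowerSeries ℤ ℂ) HahnSeries.ofPowerSeries_injective (by
      have := hdim i
      rwa [CochainComplex.finrank_homology_eq_finrank_homology_sc',
        CochainComplex.finrank_homology_eq_finrank_homology_sc'] at this)
  have e := (C.homologyIsoSc' (i - 1) i (i + 1) (by simp) (by simp)).toLinearEquiv
  exact ⟨.of_equiv e.symm, .equiv e.symm⟩

/-- Let `C` be a perfect complex over `ℂ[[ħ]]` (a bounded complex of finite free
`ℂ[[ħ]]`-modules).  Write `ι : ℂ[[ħ]] → ℂ` for the reduction `ħ ↦ 0` to the residue field and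
`ℂ((ħ))` (Laurent series) for the fraction field.  If for every integer `i` one has
`dim_ℂ H^i(ι^* C) = dim_{ℂ((ħ))} H^i(C ⊗ ℂ((ħ)))`, then every cohomology module `H^i(C)` is
a finite free `ℂ[[ħ]]`-module.  (Since the terms of `C` are free, the underived base changes
along `constantCoeff : ℂ[[ħ]] → ℂ` and `ℂ[[ħ]] → ℂ((ħ))` compute the derived ones.) -/
theorem stmt1 (C : CochainComplex (ModuleCat (PowerSeries ℂ)) ℤ)
    (hbdd : ∃ a b : ℤ, ∀ i : ℤ, (i < a ∨ b < i) → Subsingleton (C.X i))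
    (hfree : ∀ i : ℤ, Module.Free (PowerSeries ℂ) (C.X i))
    (hfin : ∀ i : ℤ, Module.Finite (PowerSeries ℂ) (C.X i))
    (hdim : ∀ i : ℤ,
      Module.finrank ℂ
          ((((ModuleCat.extendScalars
                (PowerSeries.constantCoeff : PowerSeries ℂ →+* ℂ)).mapHomologicalComplex
              (ComplexShape.up ℤ)).obj C).homology i)
        = Module.finrank (LaurentSeries ℂ)
          ((((ModuleCat.extendScalars
                (HahnSeries.ofPowerSeries ℤ ℂ : PowerSeries ℂ →+* LaurentSeries ℂ)).mapHomologicalComplex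
              (ComplexShape.up ℤ)).obj C).homology i)) :
    ∀ i : ℤ, Module.Free (PowerSeries ℂ) (C.homology i) ∧
      Module.Finite (PowerSeries ℂ) (C.homology i) :=
  stmt1_general C hfree hfin hdim
end

section
/- Let V be a graded vector space over C equipped with operators d and ∂̄ of degree +1 satisfying d² = 0, ∂̄² = 0, d∂̄ + ∂̄d = 0, together with the dd̄-lemma: ker d ∩ ker ∂̄ ∩ (im d + im ∂̄) ⊆ im(d∂̄). Consider the complex (V, d + ∂̄), where the grading is such that d + ∂̄ squares to zero and is the total differential, the subcomplex V^∂̄ = ker ∂̄ with differential induced by d + ∂̄ (which equals d on ker ∂̄), and the quotient H_∂̄ = ker ∂̄ / ∂̄(V) with differential induced by d. Then: (1) the differential induced by d on H_∂̄ is zero; (2) the inclusion (V^∂̄, d) → (V, d + ∂̄) induces an isomorphism on cohomology; (3) the projection (V^∂̄, d) → (H_∂̄, 0) induces an isomorphism on cohomology. Hence (V, d+∂̄) is formal, i.e. quasi-isomorphic to its cohomology with zero differential. -/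
/-- the abstract `dd̄`-lemma formality argument.  Let `V` be a graded complex
vector space with degree `+1` operators `d` and `δ = ∂̄` satisfying `d² = 0`, `δ² = 0`,
`dδ + δd = 0` and the `dd̄`-lemma.  Consider the total complex `(V, d + δ)`, the subcomplex
`ker δ` (on which the induced differential is `d`), and the quotient `H_δ = ker δ / δ(V)`
with the differential induced by `d`.  Then:
(1) the induced differential on `H_δ` is zero (`d(ker δ) ⊆ im δ`);
(2) the inclusion `(ker δ, d) → (V, d + δ)` is a quasi-isomorphism;
(3) the projection `(ker δ, d) → (H_δ, 0)` is a quasi-isomorphism.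
Hence `(V, d + δ)` is formal.  Quasi-isomorphism is expressed elementwise
(surjectivity and injectivity on cohomology classes). -/
theorem stmt7 (V : ℤ → Type*) [∀ i, AddCommGroup (V i)] [∀ i, Module ℂ (V i)]
    (d δ : ∀ i : ℤ, V i →ₗ[ℂ] V (i + 1))
    (hd : ∀ i (x : V i), d (i + 1) (d i x) = 0)
    (hδ : ∀ i (x : V i), δ (i + 1) (δ i x) = 0)
    (hcomm : ∀ i (x : V i), d (i + 1) (δ i x) + δ (i + 1) (d i x) = 0)
    (hlem : ∀ i (x : V (i + 1 + 1)), d (i + 1 + 1) x = 0 → δ (i + 1 + 1) x = 0 →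
      (∃ y z : V (i + 1), x = d (i + 1) y + δ (i + 1) z) →
      ∃ w : V i, x = d (i + 1) (δ i w)) :
    -- (1) the differential induced by `d` on `ker δ / δ(V)` is zero
    (∀ i (x : V i), δ i x = 0 → ∃ y : V i, d i x = δ i y) ∧
    -- (2a) the inclusion `ker δ → V` is surjective on cohomology of the total differential
    (∀ j (x : V (j + 1)), d (j + 1) x + δ (j + 1) x = 0 →
      ∃ (y : V (j + 1)) (z : V j), δ (j + 1) y = 0 ∧ d (j + 1) y = 0 ∧
        x = y + (d j z + δ j z)) ∧
    -- (2b) the inclusion `ker δ → V` is injective on cohomology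
    (∀ j (y : V (j + 1)), δ (j + 1) y = 0 → d (j + 1) y = 0 →
      (∃ z : V j, y = d j z + δ j z) → ∃ w : V j, δ j w = 0 ∧ y = d j w) ∧
    -- (3a) the projection `ker δ → ker δ / δ(V)` is surjective on cohomology
    (∀ j (x : V (j + 1)), δ (j + 1) x = 0 →
      ∃ (α : V (j + 1)) (γ : V j), δ (j + 1) α = 0 ∧ d (j + 1) α = 0 ∧ x = α + δ j γ) ∧
    -- (3b) the projection is injective on cohomology
    (∀ j (α : V (j + 1)), δ (j + 1) α = 0 → d (j + 1) α = 0 →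
      (∃ γ : V j, α = δ j γ) → ∃ w : V j, δ j w = 0 ∧ α = d j w) := by
  refine ⟨?_, ?_, ?_, ?_, ?_⟩
  · -- (1)
    intro i x hx
    obtain ⟨k, rfl⟩ : ∃ k, i = k + 1 := ⟨i - 1, by ring⟩
    obtain ⟨w, hw⟩ := hlem k (d (k + 1) x) (hd _ x)
      (by have := hcomm (k + 1) x; rwa [hx, map_zero, zero_add] at this)
      ⟨x, 0, by simp⟩
    refine ⟨-(d k w), ?_⟩
    have h2 : d (k + 1) (δ k w) = -(δ (k + 1) (d k w)) :=
      eq_neg_of_add_eq_zero_left (hcomm k w)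
    rw [hw, map_neg, h2]
  · -- (2a)
    intro j x hx
    have hdx : d (j + 1) x = -(δ (j + 1) x) := eq_neg_of_add_eq_zero_left hx
    have h1 : d (j + 1 + 1) (δ (j + 1) x) = 0 := by
      have := hcomm (j + 1) x
      rw [hdx, map_neg, add_neg_eq_zero] at this
      rw [this]; exact hδ _ _
    obtain ⟨w, hw⟩ := hlem j (δ (j + 1) x) h1 (hδ _ x) ⟨0, x, by simp⟩
    have h2 : δ (j + 1) (d j w) = -(d (j + 1) (δ j w)) :=
      eq_neg_of_add_eq_zero_right (hcomm j w)
    refine ⟨x + d j w + δ j w, -w, ?_, ?_, ?_⟩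
    · rw [map_add, map_add, h2, hδ, add_zero, hw, add_neg_cancel]
    · rw [map_add, map_add, hd, add_zero, hdx, hw, neg_add_cancel]
    · rw [map_neg, map_neg]; abel
  · -- (2b)
    rintro j y hδy hdy ⟨z, hz⟩
    obtain ⟨k, rfl⟩ : ∃ k, j = k + 1 := ⟨j - 1, by ring⟩
    have hδdz : δ (k + 1 + 1) (d (k + 1) z) = 0 := by
      have := hδy
      rwa [hz, map_add, hδ, add_zero] at this
    have hddz : d (k + 1 + 1) (δ (k + 1) z) = 0 := by
      have := hcomm (k + 1) z
      rwa [hδdz, add_zero] at this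
    obtain ⟨u, hu⟩ := hlem k (δ (k + 1) z) hddz (hδ _ z) ⟨0, z, by simp⟩
    have h2 : δ (k + 1) (d k u) = -(d (k + 1) (δ k u)) :=
      eq_neg_of_add_eq_zero_right (hcomm k u)
    refine ⟨z + δ k u + d k u, ?_, ?_⟩
    · rw [map_add, map_add, hδ, add_zero, h2, hu, add_neg_cancel]
    · rw [map_add, map_add, hd, add_zero, ← hu, hz]
  · -- (3a)
    intro j x hx
    have hδdx : δ (j + 1 + 1) (d (j + 1) x) = 0 := by
      have := hcomm (j + 1) x
      rwa [hx, map_zero, zero_add] at this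
    obtain ⟨w, hw⟩ := hlem j (d (j + 1) x) (hd _ x) hδdx ⟨x, 0, by simp⟩
    refine ⟨x - δ j w, w, ?_, ?_, ?_⟩
    · rw [map_sub, hx, hδ, sub_zero]
    · rw [map_sub, hw, sub_self]
    · abel
  · -- (3b)
    rintro j α hδα hdα ⟨γ, hγ⟩
    obtain ⟨k, rfl⟩ : ∃ k, j = k + 1 := ⟨j - 1, by ring⟩
    obtain ⟨u, hu⟩ := hlem k α hdα hδα ⟨0, γ, by simp [hγ]⟩
    exact ⟨δ k u, hδ k u, hu⟩
end

section
/- Let R be a commutative Q-algebra and let (C, m) be a minimal A∞-algebra over R (m₁ = 0). Define the Kaledin class k_C ∈ coDer¹ of the bar coalgebra B(C) = (T̄(C[1]), d) by k_C = d₃ + 2d₄ + 3d₅ + ⋯ where d = d₂ + d₃ + ⋯ is the weight decomposition of the codifferential. Then [d, k_C] = 0, i.e. k_C is a Hochschild cocycle, so it defines a class in HH²(C). -/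
/- The coefficient `n - 2` of `dₙ` in `k_C` becomes a function of the total weight once it is
symmetrised: `(n - 2) + (m - 2) = (n + m) - 4`. Since the bracket of odd elements is symmetric,
`2 [d, k_C]` in weight `w` is therefore `(w - 4)` times the weight-`w` part of `[d, d]`, which
vanishes; dividing by `2` gives the claim. -/

open Finset

theorem Finset.Nat.two_smul_sum_antidiagonal_sub_smul {R M : Type*} [CommRing R]
    [AddCommGroup M] [Module R M] {g : ℕ × ℕ → M} (hg : ∀ p, g p.swap = g p) (c : R) (w : ℕ) :
    (2 : R) • ∑ p ∈ antidiagonal w, ((p.2 : R) - c) • g p =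
      ((w : R) - 2 * c) • ∑ p ∈ antidiagonal w, g p := by
  have hswap : ∑ p ∈ antidiagonal w, ((p.2 : R) - c) • g p =
      ∑ p ∈ antidiagonal w, ((p.1 : R) - c) • g p := by
    rw [← Finset.Nat.sum_antidiagonal_swap]
    simp only [Prod.snd_swap, hg]
  calc (2 : R) • ∑ p ∈ antidiagonal w, ((p.2 : R) - c) • g p
      = ∑ p ∈ antidiagonal w, (((p.1 : R) - c) + ((p.2 : R) - c)) • g p := by
        rw [two_smul]
        nth_rewrite 1 [hswap]
        simp only [← sum_add_distrib, add_smul]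
    _ = ∑ p ∈ antidiagonal w, ((w : R) - 2 * c) • g p := by
        refine sum_congr rfl fun p hp => ?_
        rw [← mem_antidiagonal.mp hp, Nat.cast_add]
        congr 1
        ring
    _ = ((w : R) - 2 * c) • ∑ p ∈ antidiagonal w, g p := (smul_sum ..).symm

theorem Finset.Nat.sum_antidiagonal_sub_smul_eq_zero {M : Type*} [AddCommGroup M] [Module ℚ M]
    {g : ℕ × ℕ → M} (hg : ∀ p, g p.swap = g p) (c : ℚ) {w : ℕ}
    (hw : ∑ p ∈ antidiagonal w, g p = 0) :
    ∑ p ∈ antidiagonal w, ((p.2 : ℚ) - c) • g p = 0 := by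
  have h := two_smul_sum_antidiagonal_sub_smul hg c w
  rw [hw, smul_zero] at h
  exact (smul_eq_zero.mp h).resolve_left two_ne_zero

theorem stmt11_general (L : Type*) [AddCommGroup L] [Module ℚ L]
    (B : L →ₗ[ℚ] L →ₗ[ℚ] L) (hsymm : ∀ x y : L, B x y = B y x)
    (d : ℕ → L)
    (hsq : ∀ w : ℕ, ∑ p ∈ Finset.HasAntidiagonal.antidiagonal w, B (d p.1) (d p.2) = 0) :
    ∀ w : ℕ, ∑ p ∈ Finset.HasAntidiagonal.antidiagonal w, ((p.2 : ℚ) - 2) • B (d p.1) (d p.2) = 0 :=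
  fun w => Finset.Nat.sum_antidiagonal_sub_smul_eq_zero (fun _ => hsymm _ _) 2 (hsq w)

/-- the Kaledin class is a Hochschild cocycle.  For a minimal A∞-algebra
`(C, m)` over a `ℚ`-algebra, the codifferential of the bar coalgebra `B(C) = (T̄(C[1]), d)`
decomposes by tensor weight as `d = d₂ + d₃ + ⋯`, and the Kaledin class is
`k_C = d₃ + 2 d₄ + 3 d₅ + ⋯ = Σ (n−2) dₙ`.  The claim `[d, k_C] = 0` holds weight by weight.

We formalize the weight-graded content: the coderivations `dₙ` are odd elements of the
(pre-)Lie algebra of coderivations, so the bracket `B(x, y) = [x, y]` of two odd elements is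
*symmetric*; the relation `[d, d] = 0` says that for every total weight `w` the sum of
`B(dₙ, dₘ)` over `n + m = w` vanishes; and the claim `[d, k_C] = 0` says that for every `w`
the sum of `(m − 2)·B(dₙ, dₘ)` over `n + m = w` vanishes.  So: for a symmetric bilinear
bracket `B` on a `ℚ`-module `L` and a family `d : ℕ → L` with `dₙ = 0` for `n < 2` (the
codifferential of a minimal A∞-structure starts in weight `2`), the weightwise relations
`Σ_{n+m=w} B(dₙ, dₘ) = 0` imply `Σ_{n+m=w} (m−2)·B(dₙ, dₘ) = 0`. -/
theorem stmt11 (L : Type*) [AddCommGroup L] [Module ℚ L]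
    (B : L →ₗ[ℚ] L →ₗ[ℚ] L) (hsymm : ∀ x y : L, B x y = B y x)
    (d : ℕ → L) (hlow : ∀ n < 2, d n = 0)
    (hsq : ∀ w : ℕ, ∑ p ∈ Finset.HasAntidiagonal.antidiagonal w, B (d p.1) (d p.2) = 0) :
    ∀ w : ℕ, ∑ p ∈ Finset.HasAntidiagonal.antidiagonal w, ((p.2 : ℚ) - 2) • B (d p.1) (d p.2) = 0 :=
  stmt11_general L B hsymm d hsq
end
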